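/- If a₁ ≤ a₂ with a₂ ≥ 3 and a₂ − a₁ ≤ 1, then the complete multipartite graph K(a₁, a₂, …, a_r) is not D-unique: the graph H = H_{a₂−a₁}(a₁) ∨ K(a₃,…,a_r) satisfies D(H,x) = D(K(a₁,…,a_r),x) but is not isomorphic to K(a₁,…,a_r). -/

import Mathlib

/-!
A set dominates a join `G ∨ M` iff it meets both sides, or lies in one side and dominates that
side. So a size-preserving bijection of the subsets of `V` carrying the dominating sets of `G`
onto those of `G'` extends to the subsets of `V ⊕ W`, and then `G ∨ M` and `G' ∨ M` have the
same domination polynomial. `H₀(a)` and `K(a,a)` have the same dominating sets. The dominating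
sets of `H₁(a)` and `K(a,a+1)` differ in two sets of size `a` only: the `a`-side dominates
`K(a,a+1)` but not `H₁(a)`, and the matched vertices of the `(a+1)`-side dominate `H₁(a)` but not
`K(a,a+1)`; swapping these two sets gives the bijection.

A join of complete multipartite graphs is complete multipartite, whereas in `H_t(a)` two vertices
of `K_a` and a vertex of `K_{a+t}` matched to neither of them span a complement of `P₃`.
-/

/-- `S` dominates `G`: every vertex is in `S` or adjacent to a member of `S`. -/
def Dominates {V : Type*} (G : SimpleGraph V) (S : Set V) : Prop :=
  ∀ v : V, v ∈ S ∨ ∃ u ∈ S, G.Adj u v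

/-- number of dominating sets of cardinality `i`. -/
noncomputable def numDom {V : Type*} [Fintype V] (G : SimpleGraph V) (i : ℕ) : ℕ :=
  Nat.card {S : Finset V // S.card = i ∧ Dominates G ↑S}

/-- the domination polynomial `D(G,x) = Σ_{i=1}^{n} d(G,i) x^i`. -/
noncomputable def domPoly {V : Type*} [Fintype V] (G : SimpleGraph V) : Polynomial ℤ :=
  ∑ i ∈ Finset.Icc 1 (Fintype.card V), (numDom G i : Polynomial ℤ) * Polynomial.X ^ i

/-- the join of two vertex-disjoint graphs. -/
def GJoin {α β : Type*} (G : SimpleGraph α) (H : SimpleGraph β) : SimpleGraph (α ⊕ β) where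
  Adj x y := match x, y with
    | Sum.inl a, Sum.inl b => G.Adj a b
    | Sum.inr a, Sum.inr b => H.Adj a b
    | _, _ => True
  symm := by constructor; rintro (a|a) (b|b) h <;> simp_all [SimpleGraph.adj_comm]
  loopless := by constructor; rintro (a|a) h <;> simp_all

/-- `H_t(a)`: a copy of `K_a` and a copy of `K_{a+t}`, connected by a matching
from `K_a` into `K_{a+t}`. -/
def Hgraph (a t : ℕ) : SimpleGraph (Fin a ⊕ Fin (a + t)) where
  Adj x y := match x, y with
    | Sum.inl i, Sum.inl j => i ≠ j
    | Sum.inr i, Sum.inr j => i ≠ j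
    | Sum.inl i, Sum.inr j => (j : ℕ) = (i : ℕ)
    | Sum.inr i, Sum.inl j => (i : ℕ) = (j : ℕ)
  symm := by constructor; rintro (i|i) (j|j) h <;> simp_all <;> omega
  loopless := by constructor; rintro (i|i) h <;> simp_all

open Finset Sum SimpleGraph

section Adjacency

variable {V W : Type*} {G : SimpleGraph V} {M : SimpleGraph W} {a t : ℕ}

@[simp] lemma gJoin_adj_inl_inl {x y : V} : (GJoin G M).Adj (inl x) (inl y) ↔ G.Adj x y := Iff.rfl
@[simp] lemma gJoin_adj_inl_inr {x : V} {y : W} : (GJoin G M).Adj (inl x) (inr y) := trivial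
@[simp] lemma gJoin_adj_inr_inl {x : W} {y : V} : (GJoin G M).Adj (inr x) (inl y) := trivial
@[simp] lemma gJoin_adj_inr_inr {x y : W} : (GJoin G M).Adj (inr x) (inr y) ↔ M.Adj x y := Iff.rfl

@[simp] lemma hgraph_adj_inl_inl {i j : Fin a} : (Hgraph a t).Adj (inl i) (inl j) ↔ i ≠ j :=
  Iff.rfl
@[simp] lemma hgraph_adj_inr_inr {i j : Fin (a + t)} :
    (Hgraph a t).Adj (inr i) (inr j) ↔ i ≠ j := Iff.rfl
@[simp] lemma hgraph_adj_inl_inr {i : Fin a} {j : Fin (a + t)} :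
    (Hgraph a t).Adj (inl i) (inr j) ↔ (j : ℕ) = i := Iff.rfl
@[simp] lemma hgraph_adj_inr_inl {i : Fin (a + t)} {j : Fin a} :
    (Hgraph a t).Adj (inr i) (inl j) ↔ (i : ℕ) = j := Iff.rfl

end Adjacency

section Counting

variable {V : Type*} [Fintype V] {G : SimpleGraph V}

lemma numDom_congr {V' : Type*} [Fintype V'] {G' : SimpleGraph V'} (e : Finset V ≃ Finset V')
    (he_card : ∀ S, #(e S) = #S)
    (he_dom : ∀ S : Finset V, Dominates G ↑S ↔ Dominates G' ↑(e S)) (i : ℕ) :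
    numDom G i = numDom G' i :=
  Nat.card_congr <| e.subtypeEquiv fun S => by rw [he_card, he_dom]

lemma domPoly_congr {G' : SimpleGraph V} (e : Finset V ≃ Finset V) (he_card : ∀ S, #(e S) = #S)
    (he_dom : ∀ S : Finset V, Dominates G ↑S ↔ Dominates G' ↑(e S)) :
    domPoly G = domPoly G' := by
  simp only [domPoly, numDom_congr e he_card he_dom]

lemma card_swap_apply {α : Type*} [DecidableEq α] {A B : Finset α} (h : #A = #B)
    (S : Finset α) : #(Equiv.swap A B S) = #S := by
  rw [Equiv.swap_apply_def]
  split_ifs with hA hB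
  · rw [hA, h]
  · rw [hB, h]
  · rfl

end Counting

section Join

variable {V W : Type*} {G : SimpleGraph V} {M : SimpleGraph W}

lemma dominates_gJoin_iff {S : Set (V ⊕ W)} :
    Dominates (GJoin G M) S ↔
      (Dominates G (inl ⁻¹' S) ∨ ∃ w, inr w ∈ S) ∧ (Dominates M (inr ⁻¹' S) ∨ ∃ v, inl v ∈ S) := by
  simp only [Dominates, Sum.forall, Sum.exists, Set.mem_preimage, gJoin_adj_inl_inl,
    gJoin_adj_inr_inl, gJoin_adj_inl_inr, gJoin_adj_inr_inr, and_true]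
  grind

lemma dominates_gJoin_disjSum_iff {s : Finset V} {u : Finset W} :
    Dominates (GJoin G M) ↑(s.disjSum u) ↔
      (Dominates G ↑s ∨ u.Nonempty) ∧ (Dominates M ↑u ∨ s.Nonempty) := by
  have hs : inl ⁻¹' (↑(s.disjSum u) : Set (V ⊕ W)) = ↑s := Set.ext fun _ => inl_mem_disjSum
  have hu : inr ⁻¹' (↑(s.disjSum u) : Set (V ⊕ W)) = ↑u := Set.ext fun _ => inr_mem_disjSum
  simp [dominates_gJoin_iff, hs, hu, Finset.Nonempty]

lemma domPoly_gJoin_congr [Fintype V] [Fintype W] {G' : SimpleGraph V} (e : Finset V ≃ Finset V)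
    (he_card : ∀ S, #(e S) = #S)
    (he_dom : ∀ S : Finset V, Dominates G ↑S ↔ Dominates G' ↑(e S)) :
    domPoly (GJoin G M) = domPoly (GJoin G' M) := by
  refine domPoly_congr (sumEquiv.toEquiv.trans <|
    (e.prodCongr (Equiv.refl _)).trans sumEquiv.toEquiv.symm) (fun S => ?_) (fun S => ?_)
  · simp [he_card, ← card_toLeft_add_card_toRight (u := S)]
  · conv_lhs => rw [← toLeft_disjSum_toRight (u := S)]
    simp [dominates_gJoin_disjSum_iff, he_dom, ← Finset.card_pos, he_card]

end Join

section Dominating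

lemma dominates_completeBipartiteGraph_iff {α β : Type*} {S : Set (α ⊕ β)} :
    Dominates (completeBipartiteGraph α β) S ↔
      ((∃ j, inr j ∈ S) ∨ ∀ i, inl i ∈ S) ∧ ((∃ i, inl i ∈ S) ∨ ∀ j, inr j ∈ S) := by
  simp only [Dominates, Sum.forall, Sum.exists, completeBipartiteGraph_adj]
  grind

variable {a t : ℕ}

lemma dominates_hgraph_iff {S : Set (Fin a ⊕ Fin (a + t))} :
    Dominates (Hgraph a t) S ↔
      ((∃ i, inl i ∈ S) ∨ ∀ i, inr (Fin.castAdd t i) ∈ S) ∧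
        ((∃ j, inr j ∈ S) ∨ t = 0 ∧ ∀ i, inl i ∈ S) := by
  simp only [Dominates, Sum.forall, Sum.exists, hgraph_adj_inl_inl, hgraph_adj_inr_inr,
    hgraph_adj_inl_inr, hgraph_adj_inr_inl]
  constructor
  · rintro ⟨hl, hr⟩
    refine ⟨or_iff_not_imp_left.2 fun hS i => ?_, or_iff_not_imp_left.2 fun hS => ?_⟩
    · obtain h | ⟨i', hi', -⟩ | ⟨j, hj, hji⟩ := hl i
      · exact absurd ⟨i, h⟩ hS
      · exact absurd ⟨i', hi'⟩ hS
      · rwa [show Fin.castAdd t i = j from Fin.ext hji.symm]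
    · have partner : ∀ j : Fin (a + t), ∃ i, inl i ∈ S ∧ (j : ℕ) = i := fun j => by
        obtain h | h | ⟨j', hj', -⟩ := hr j
        exacts [absurd ⟨j, h⟩ hS, h, absurd ⟨j', hj'⟩ hS]
      refine ⟨?_, fun i => ?_⟩
      · by_contra ht
        obtain ⟨i, -, hi⟩ := partner ⟨a, by omega⟩
        exact i.isLt.ne' hi
      · obtain ⟨i', hi', h⟩ := partner (Fin.castAdd t i)
        rwa [show i = i' from Fin.ext h]
  · rintro ⟨hl, hr⟩
    refine ⟨fun i => ?_, fun j => ?_⟩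
    · rcases hl with ⟨i', hi'⟩ | h
      · by_cases hii : i' = i
        · exact .inl (hii ▸ hi')
        · exact .inr (.inl ⟨i', hi', hii⟩)
      · exact .inr (.inr ⟨_, h i, rfl⟩)
    · rcases hr with ⟨j', hj'⟩ | ⟨rfl, h⟩
      · by_cases hjj : j' = j
        · exact .inl (hjj ▸ hj')
        · exact .inr (.inr ⟨j', hj', hjj⟩)
      · exact .inr (.inl ⟨⟨j, j.isLt⟩, h _, rfl⟩)

lemma dominates_hgraph_zero_iff {S : Set (Fin a ⊕ Fin (a + 0))} :
    Dominates (Hgraph a 0) S ↔ Dominates (completeBipartiteGraph (Fin a) (Fin (a + 0))) S := by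
  simp only [dominates_hgraph_iff, dominates_completeBipartiteGraph_iff, Fin.castAdd_zero]
  tauto

lemma dominates_hgraph_one_iff_of_ne {s : Finset (Fin a)} {u : Finset (Fin (a + 1))}
    (ha : 0 < a) (hA : ¬(s = univ ∧ u = ∅)) (hB : ¬(s = ∅ ∧ u = univ.map Fin.castSuccEmb)) :
    Dominates (Hgraph a 1) ↑(s.disjSum u) ↔
      Dominates (completeBipartiteGraph (Fin a) (Fin (a + 1))) ↑(s.disjSum u) := by
  simp only [dominates_hgraph_iff, dominates_completeBipartiteGraph_iff, mem_coe,
    inl_mem_disjSum, inr_mem_disjSum]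
  have : NeZero a := ⟨ha.ne'⟩
  rcases s.eq_empty_or_nonempty with rfl | ⟨i, hi⟩ <;>
    rcases u.eq_empty_or_nonempty with rfl | ⟨j, hj⟩
  · simp
  · simp only [true_and, notMem_empty, exists_const, false_or, one_ne_zero, forall_const,
      and_self, or_false] at hB ⊢
    refine ⟨fun ⟨h, hne⟩ => ⟨hne, fun k => ?_⟩, fun ⟨hne, h⟩ => ⟨fun i => h _, hne⟩⟩
    induction k using Fin.lastCases with
    | cast i => exact h i
    | last =>
      by_contra hlast
      refine hB (ext fun k => ?_)
      induction k using Fin.lastCases with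
      | cast i => exact iff_of_true (h i) (mem_map_of_mem _ (mem_univ i))
      | last => simpa using hlast
  · simp only [notMem_empty, exists_false, or_false, and_true, one_ne_zero, false_and] at hA ⊢
    exact iff_of_false And.right fun h => hA (eq_univ_of_forall (h.1.resolve_left id))
  · exact iff_of_true ⟨.inl ⟨i, hi⟩, .inl ⟨j, hj⟩⟩ ⟨.inl ⟨j, hj⟩, .inl ⟨i, hi⟩⟩

lemma dominates_hgraph_one_iff_swap (ha : 0 < a) (S : Finset (Fin a ⊕ Fin (a + 1))) :
    Dominates (Hgraph a 1) ↑S ↔ Dominates (completeBipartiteGraph (Fin a) (Fin (a + 1)))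
      ↑(Equiv.swap (univ.disjSum ∅)
        ((∅ : Finset (Fin a)).disjSum (univ.map Fin.castSuccEmb)) S) := by
  obtain ⟨s, u, rfl⟩ : ∃ (s : Finset (Fin a)) (u : Finset (Fin (a + 1))), S = s.disjSum u :=
    ⟨_, _, toLeft_disjSum_toRight.symm⟩
  rw [Equiv.swap_apply_def]
  simp only [disjSum_inj]
  split_ifs with hA hB
  · obtain ⟨rfl, rfl⟩ := hA
    simp only [dominates_hgraph_iff, dominates_completeBipartiteGraph_iff, mem_coe,
      inl_mem_disjSum, inr_mem_disjSum]
    refine iff_of_false (by simp) fun h => ?_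
    simpa using h.2.resolve_left (by simp) (Fin.last a)
  · obtain ⟨rfl, rfl⟩ := hB
    simp only [dominates_hgraph_iff, dominates_completeBipartiteGraph_iff, mem_coe,
      inl_mem_disjSum, inr_mem_disjSum]
    have hmatched (i : Fin a) : Fin.castSucc i ∈ univ.map Fin.castSuccEmb :=
      mem_map_of_mem _ (mem_univ i)
    exact iff_of_true ⟨.inr hmatched, .inl ⟨_, hmatched ⟨0, ha⟩⟩⟩
      ⟨.inr fun i => mem_univ i, .inl ⟨⟨0, ha⟩, mem_univ _⟩⟩
  · exact dominates_hgraph_one_iff_of_ne ha hA hB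

end Dominating

section CompleteMultipartite

variable {V W : Type*} {G : SimpleGraph V} {M : SimpleGraph W}

lemma SimpleGraph.IsCompleteMultipartite.gJoin (hG : G.IsCompleteMultipartite)
    (hM : M.IsCompleteMultipartite) : (GJoin G M).IsCompleteMultipartite :=
  ⟨by
    rintro (x | x) (y | y) (z | z) hxy hyz <;> simp only [gJoin_adj_inl_inl, gJoin_adj_inr_inr,
      gJoin_adj_inl_inr, gJoin_adj_inr_inl, not_true_eq_false] at hxy hyz ⊢
    exacts [hG.trans x y z hxy hyz, hM.trans x y z hxy hyz]⟩

lemma SimpleGraph.IsCompleteMultipartite.of_gJoin_left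
    (h : (GJoin G M).IsCompleteMultipartite) : G.IsCompleteMultipartite :=
  ⟨fun x y z => h.trans (inl x) (inl y) (inl z)⟩

lemma completeBipartiteGraph_isCompleteMultipartite {α β : Type*} :
    (completeBipartiteGraph α β).IsCompleteMultipartite :=
  ⟨by rintro (x | x) (y | y) (z | z) <;> simp⟩

lemma not_isCompleteMultipartite_hgraph {a t : ℕ} (ha : 2 ≤ a) (hat : 3 ≤ a + t) :
    ¬ (Hgraph a t).IsCompleteMultipartite :=
  not_isCompleteMultipartite_iff_exists_isPathGraph3Compl.2
    ⟨inr ⟨2, hat⟩, inl ⟨0, by omega⟩, inl ⟨1, ha⟩, by simp, by simp, by simp⟩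

end CompleteMultipartite

theorem not_D_unique_of_close_sizes_general (a₁ a₂ : ℕ) (h12 : a₁ ≤ a₂) (h3 : 3 ≤ a₂)
    (hd : a₂ - a₁ ≤ 1) {m : ℕ} (b : Fin m → ℕ) :
    domPoly (GJoin (Hgraph a₁ (a₂ - a₁))
        (SimpleGraph.completeMultipartiteGraph fun i => Fin (b i))) =
      domPoly (GJoin (completeBipartiteGraph (Fin a₁) (Fin a₂))
        (SimpleGraph.completeMultipartiteGraph fun i => Fin (b i))) ∧
    ¬ Nonempty ((GJoin (Hgraph a₁ (a₂ - a₁))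
        (SimpleGraph.completeMultipartiteGraph fun i => Fin (b i))) ≃g
      (GJoin (completeBipartiteGraph (Fin a₁) (Fin a₂))
        (SimpleGraph.completeMultipartiteGraph fun i => Fin (b i)))) := by
  obtain ⟨t, rfl⟩ := Nat.exists_eq_add_of_le h12
  rw [Nat.add_sub_cancel_left] at hd ⊢
  refine ⟨?_, fun ⟨e⟩ => not_isCompleteMultipartite_hgraph (by omega) h3 ?_⟩
  · interval_cases t
    · exact domPoly_gJoin_congr (Equiv.refl _) (fun _ => rfl) fun _ => dominates_hgraph_zero_iff
    · exact domPoly_gJoin_congr _ (card_swap_apply (by simp))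
        (dominates_hgraph_one_iff_swap (by omega))
  · exact ((completeBipartiteGraph_isCompleteMultipartite.gJoin
      (completeMultipartiteGraph.isCompleteMultipartite _)).comap e.toEmbedding).of_gJoin_left

/-- If `a₁ ≤ a₂`, `a₂ ≥ 3` and `a₂ − a₁ ≤ 1`, then the complete multipartite graph
`K(a₁,a₂,b₁,…,b_m)` is not `D`-unique: `H_{a₂−a₁}(a₁) ∨ K(b₁,…,b_m)` has the same
domination polynomial but is not isomorphic to it. -/
theorem not_D_unique_of_close_sizes (a₁ a₂ : ℕ) (h12 : a₁ ≤ a₂) (h3 : 3 ≤ a₂)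
    (hd : a₂ - a₁ ≤ 1) {m : ℕ} (b : Fin m → ℕ) (hb : ∀ i, 0 < b i) :
    domPoly (GJoin (Hgraph a₁ (a₂ - a₁))
        (SimpleGraph.completeMultipartiteGraph fun i => Fin (b i))) =
      domPoly (GJoin (completeBipartiteGraph (Fin a₁) (Fin a₂))
        (SimpleGraph.completeMultipartiteGraph fun i => Fin (b i))) ∧
    ¬ Nonempty ((GJoin (Hgraph a₁ (a₂ - a₁))
        (SimpleGraph.completeMultipartiteGraph fun i => Fin (b i))) ≃g
      (GJoin (completeBipartiteGraph (Fin a₁) (Fin a₂))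
        (SimpleGraph.completeMultipartiteGraph fun i => Fin (b i)))) :=
  not_D_unique_of_close_sizes_general a₁ a₂ h12 h3 hd b
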